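/- Assume the bilevel setting: g : ℝ^d × ℝ^p → ℝ is differentiable with ∇_x g and ∇_y g each L_g-Lipschitz in each variable; for every x, g(x,·) attains its minimum G(x) at y*(x), satisfies the μ-PL condition ‖∇_y g(x, y)‖² ≥ 2μ (g(x, y) − G(x)) and the quadratic growth condition g(x, y) − G(x) ≥ (μ/2)‖y − y*(x)‖² for all y, with 0 < μ ≤ L_g; G is differentiable with ∇G(x) = ∇_x g(x, y*(x)) and ∇G is L_G-Lipschitz with L_G ≥ max{L_g, L_g²/(2μ)}; F : ℝ^d → ℝ is differentiable with L_F-Lipschitz gradient; h : ℝ^d → ℝ is convex; Φ = F + h is bounded below by Φ* > −∞; and L̂ > 0. Let sequences (x_t, y_t, w_t, A_t, B_t)_{t=1}^{T+1} satisfy: A_t symmetric with A_t ⪰ ρ I_d; B_t symmetric with ρ_l I_p ⪯ B_t ⪯ ρ_u I_p, with ρ_l = ρ ∈ (0,1) and ρ_l ρ_u ≥ 1; x_{t+1} = argmin_{z}{ ⟨w_t, z⟩ + (1/(2γ))(z − x_t)ᵀ A_t (z − x_t) + h(z) }; y_{t+1} = y_t − λ B_t^{-1} ∇_y g(x_t,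 y_t); and ‖w_t − ∇F(x_t)‖² ≤ (2 L̂²/μ)(g(x_t, y_t) − G(x_t)) for all t. Suppose 0 < γ ≤ min{ 3ρ/(4 L_F), ρλμ²/(8 ρ_u L̂²), λμρ_l/(16 L_G ρ_u), μρ_l/(16 L_g² ρ_u) } and 0 < λ ≤ 1/(2 L_g ρ_u). For each t define the gradient mapping 𝒢(x_t, ∇F(x_t), γ) = (x_t − x̄_{t+1})/γ, where x̄_{t+1} = argmin_{z}{ ⟨∇F(x_t), z⟩ + (1/(2γ))(z − x_t)ᵀ A_t (z − x_t) + h(z) }. Then (1/T) Σ_{t=1}^{T} ‖𝒢(x_t, ∇F(x_t), γ)‖² ≤ 8 ( Φ(x_1) − Φ* + g(x_1, y_1) − G(x_1) ) / (T ρ γ). -/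

import Mathlib

/-!
Along the iterates, the potential `V_t = Φ(x_t) + (g(x_t, y_t) - G(x_t))` decreases by at least
`ργ/8 · ‖𝒢(x_t, ∇F(x_t), γ)‖²`; summing over `t` and using `V ≥ Φ*` gives the bound.

For the upper level, the optimality condition of the proximal step together with the descent
lemma for `F` decreases `Φ` by `ρ/(2γ) ‖x_{t+1} - x_t‖²`, up to the hypergradient error
`‖w_t - ∇F(x_t)‖²`. For the lower level, the preconditioned gradient step and the PL condition
contract the gap `g(x_t, ·) - G(x_t)` by the factor `1 - λμ/ρ_u`, while moving `x_t` to `x_{t+1}`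
costs only `O(‖x_{t+1} - x_t‖²)` once the cross term is absorbed via quadratic growth. The
error bound on `w_t` lets the gap contraction pay for the hypergradient error, and the step-size
conditions balance the remaining `‖x_{t+1} - x_t‖²` terms. Finally, the gradient mapping is
controlled by `‖x_{t+1} - x_t‖` and the hypergradient error, because the proximal step is
`γ/ρ`-Lipschitz in its linear term.
-/

open scoped RealInnerProductSpace
open Filter Topology

theorem nonneg_of_forall_mul_add_sq_mul_nonneg {a b : ℝ}
    (H : ∀ s : ℝ, 0 < s → s ≤ 1 → 0 ≤ s * a + s ^ 2 * b) : 0 ≤ a := by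
  have hcont : Continuous fun s : ℝ => a + s * b := by fun_prop
  have hlim : Tendsto (fun s : ℝ => a + s * b) (𝓝[>] 0) (𝓝 a) :=
    tendsto_nhdsWithin_of_tendsto_nhds (hcont.tendsto' 0 a (by simp))
  refine ge_of_tendsto hlim ?_
  filter_upwards [Ioc_mem_nhdsGT zero_lt_one] with s ⟨hs0, hs1⟩
  have := H s hs0 hs1
  exact le_of_mul_le_mul_left (by linarith : s * 0 ≤ s * (a + s * b)) hs0

section InnerProduct

variable {E : Type*} [NormedAddCommGroup E] [InnerProductSpace ℝ E]

theorem norm_sq_apply_le_mul_inner_apply_self {B : E →L[ℝ] E} {c : ℝ} (hc : 0 < c)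
    (hB : ∀ v w, ⟪B v, w⟫ = ⟪v, B w⟫) (hpos : ∀ v, 0 ≤ ⟪B v, v⟫)
    (hle : ∀ v, ⟪B v, v⟫ ≤ c * ‖v‖ ^ 2) (v : E) :
    ‖B v‖ ^ 2 ≤ c * ⟪B v, v⟫ := by
  have hBBv : ⟪B (B v), v⟫ = ‖B v‖ ^ 2 := by rw [hB, real_inner_self_eq_norm_sq]
  have hexpand : ⟪B (c • v - B v), c • v - B v⟫
      = c ^ 2 * ⟪B v, v⟫ - 2 * c * ‖B v‖ ^ 2 + ⟪B (B v), B v⟫ := by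
    rw [map_sub, map_smul]
    simp only [inner_sub_left, inner_sub_right, real_inner_smul_left, real_inner_smul_right]
    rw [real_inner_self_eq_norm_sq, hB v, real_inner_comm, ← hB, hBBv]
    ring
  nlinarith [hpos (c • v - B v), hle (B v)]

noncomputable def proxObjective (A : E →L[ℝ] E) (γ : ℝ) (h : E → ℝ) (w x₀ z : E) : ℝ :=
  ⟪w, z⟫ + (1 / (2 * γ)) * ⟪A (z - x₀), z - x₀⟫ + h z

variable {A : E →L[ℝ] E} {γ ρ : ℝ} {h : E → ℝ} {w w' x₀ xp xq : E}

theorem proxObjective_variational_ineq (hA : ∀ v w, ⟪A v, w⟫ = ⟪v, A w⟫)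
    (hh : ConvexOn ℝ Set.univ h) (hmin : IsMinOn (proxObjective A γ h w x₀) Set.univ xp)
    (z : E) : 0 ≤ ⟪w, z - xp⟫ + γ⁻¹ * ⟪A (xp - x₀), z - xp⟫ + h z - h xp := by
  set v := z - xp
  set c := xp - x₀
  refine nonneg_of_forall_mul_add_sq_mul_nonneg (b := (1 / (2 * γ)) * ⟪A v, v⟫)
    fun s hs0 hs1 => ?_
  have hmin_s : proxObjective A γ h w x₀ xp ≤ proxObjective A γ h w x₀ (xp + s • v) :=
    hmin (Set.mem_univ _)
  have hquad : ⟪A (xp + s • v - x₀), xp + s • v - x₀⟫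
      = ⟪A c, c⟫ + 2 * s * ⟪A c, v⟫ + s ^ 2 * ⟪A v, v⟫ := by
    rw [show xp + s • v - x₀ = c + s • v by simp only [c]; abel, map_add, map_smul]
    simp only [inner_add_left, inner_add_right, real_inner_smul_left, real_inner_smul_right]
    rw [hA v c, real_inner_comm (A c) v]
    ring
  have hconv : h (xp + s • v) ≤ (1 - s) * h xp + s * h z := by
    rw [show xp + s • v = (1 - s) • xp + s • z by simp only [v]; module]
    exact hh.2 (Set.mem_univ xp) (Set.mem_univ z) (by linarith) hs0.le (by ring)
  have hcoef : 1 / (2 * γ) * (2 * s * ⟪A c, v⟫) = s * (γ⁻¹ * ⟪A c, v⟫) := by ring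
  simp only [proxObjective, hquad, inner_add_right, real_inner_smul_right] at hmin_s
  linarith

theorem proxObjective_argmin_lipschitz (hA : ∀ v w, ⟪A v, w⟫ = ⟪v, A w⟫)
    (hApos : ∀ v, ρ * ‖v‖ ^ 2 ≤ ⟪A v, v⟫) (hh : ConvexOn ℝ Set.univ h) (hγ : 0 < γ)
    (hp : IsMinOn (proxObjective A γ h w x₀) Set.univ xp)
    (hq : IsMinOn (proxObjective A γ h w' x₀) Set.univ xq) :
    ρ * ‖xq - xp‖ ≤ γ * ‖w - w'‖ := by
  have hp' := proxObjective_variational_ineq hA hh hp xq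
  have hq' := proxObjective_variational_ineq hA hh hq xp
  set v := xq - xp
  have hAv : ⟪A (xp - x₀), v⟫ + ⟪A (xq - x₀), xp - xq⟫ = -⟪A v, v⟫ := by
    rw [← neg_sub xq xp, inner_neg_right, ← sub_eq_add_neg, ← inner_sub_left, ← map_sub,
      sub_sub_sub_cancel_right, ← neg_sub xq xp, map_neg, inner_neg_left]
  have hwv : ⟪w, v⟫ + ⟪w', xp - xq⟫ = ⟪w - w', v⟫ := by
    rw [← neg_sub xq xp, inner_neg_right, inner_sub_left]; ring
  have hkey : ρ * ‖v‖ ^ 2 ≤ γ * (‖w - w'‖ * ‖v‖) := by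
    have h1 : γ⁻¹ * ⟪A v, v⟫ ≤ ‖w - w'‖ * ‖v‖ := by
      have hAv' := congrArg (γ⁻¹ * ·) hAv
      simp only [mul_add, mul_neg] at hAv'
      linarith [real_inner_le_norm (w - w') v]
    have h2 := mul_le_mul_of_nonneg_left h1 hγ.le
    rw [← mul_assoc, mul_inv_cancel₀ hγ.ne', one_mul] at h2
    linarith [hApos v]
  rcases (norm_nonneg v).eq_or_lt with hv | hv
  · rw [← hv, mul_zero]; positivity
  · exact le_of_mul_le_mul_right (by linarith : ρ * ‖v‖ * ‖v‖ ≤ γ * ‖w - w'‖ * ‖v‖) hv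

theorem gradientMapping_sq_le (hA : ∀ v w, ⟪A v, w⟫ = ⟪v, A w⟫)
    (hApos : ∀ v, ρ * ‖v‖ ^ 2 ≤ ⟪A v, v⟫) (hh : ConvexOn ℝ Set.univ h) (hγ : 0 < γ) (hρ : 0 ≤ ρ)
    (hp : IsMinOn (proxObjective A γ h w x₀) Set.univ xp)
    (hq : IsMinOn (proxObjective A γ h w' x₀) Set.univ xq) :
    ρ ^ 2 * (γ ^ 2 * ‖γ⁻¹ • (x₀ - xq)‖ ^ 2)
      ≤ 2 * ρ ^ 2 * ‖xp - x₀‖ ^ 2 + 2 * γ ^ 2 * ‖w - w'‖ ^ 2 := by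
  have hlip := proxObjective_argmin_lipschitz hA hApos hh hγ hp hq
  have hscale : γ ^ 2 * ‖γ⁻¹ • (x₀ - xq)‖ ^ 2 = ‖x₀ - xq‖ ^ 2 := by
    rw [norm_smul, mul_pow, norm_inv, Real.norm_of_nonneg hγ.le, ← mul_assoc, ← mul_pow,
      mul_inv_cancel₀ hγ.ne', one_pow, one_mul]
  have htri : ‖x₀ - xq‖ ≤ ‖xp - x₀‖ + ‖xq - xp‖ := by
    rw [norm_sub_rev xp x₀, norm_sub_rev xq xp]
    exact norm_sub_le_norm_sub_add_norm_sub x₀ xp xq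
  have hsq : ‖x₀ - xq‖ ^ 2 ≤ 2 * ‖xp - x₀‖ ^ 2 + 2 * ‖xq - xp‖ ^ 2 := by
    linarith [pow_le_pow_left₀ (norm_nonneg _) htri 2, sq_nonneg (‖xp - x₀‖ - ‖xq - xp‖)]
  have hlip_sq := pow_le_pow_left₀ (by positivity) hlip 2
  rw [hscale]
  linarith [mul_le_mul_of_nonneg_left hsq (sq_nonneg ρ)]

end InnerProduct

section Smooth

variable {E P : Type*} [NormedAddCommGroup E] [InnerProductSpace ℝ E] [CompleteSpace E]
  [NormedAddCommGroup P] [InnerProductSpace ℝ P] [CompleteSpace P]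

theorem le_add_inner_add_of_lipschitz_gradient {f : E → ℝ} {f' : E → E} {L : ℝ}
    (hf : ∀ z, HasGradientAt f (f' z) z)
    (hlip : ∀ a b, ‖f' a - f' b‖ ≤ L * ‖a - b‖) (a b : E) :
    f b ≤ f a + ⟪f' a, b - a⟫ + L / 2 * ‖b - a‖ ^ 2 := by
  set v := b - a
  have hpath : ∀ s : ℝ, HasDerivAt (fun s : ℝ => f (a + s • v)) ⟪f' (a + s • v), v⟫ s := by
    intro s
    have hline : HasDerivAt (fun s : ℝ => a + s • v) v s := by
      simpa using ((hasDerivAt_id s).smul_const v).const_add a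
    simpa [Function.comp_def] using (hf (a + s • v)).hasFDerivAt.comp_hasDerivAt s hline
  have hbound : ∀ s : ℝ, HasDerivAt (fun s : ℝ => f a + s * ⟪f' a, v⟫ + L / 2 * s ^ 2 * ‖v‖ ^ 2)
      (⟪f' a, v⟫ + L * s * ‖v‖ ^ 2) s := by
    intro s
    exact ((((hasDerivAt_id s).mul_const _).const_add (f a)).add
      (((hasDerivAt_pow 2 s).const_mul (L / 2)).mul_const _)).congr_deriv (by norm_num only; ring)
  have hslope : ∀ s ∈ Set.Ico (0 : ℝ) 1, ⟪f' (a + s • v), v⟫ ≤ ⟪f' a, v⟫ + L * s * ‖v‖ ^ 2 := by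
    rintro s ⟨hs, -⟩
    calc ⟪f' (a + s • v), v⟫ = ⟪f' a, v⟫ + ⟪f' (a + s • v) - f' a, v⟫ := by
          rw [inner_sub_left]; ring
      _ ≤ ⟪f' a, v⟫ + ‖f' (a + s • v) - f' a‖ * ‖v‖ := by gcongr; exact real_inner_le_norm _ _
      _ ≤ ⟪f' a, v⟫ + L * ‖a + s • v - a‖ * ‖v‖ := by gcongr; exact hlip _ _
      _ = ⟪f' a, v⟫ + L * s * ‖v‖ ^ 2 := by
          rw [add_sub_cancel_left, norm_smul, Real.norm_of_nonneg hs]; ring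
  have := image_le_of_deriv_right_le_deriv_boundary
    (fun s _ => (hpath s).continuousAt.continuousWithinAt)
    (fun s _ => (hpath s).hasDerivWithinAt) (by simp)
    (fun s _ => (hbound s).continuousAt.continuousWithinAt)
    (fun s _ => (hbound s).hasDerivWithinAt) hslope (Set.right_mem_Icc.2 zero_le_one)
  simpa [v] using this

theorem add_inner_sub_le_of_lipschitz_gradient {f : E → ℝ} {f' : E → E} {L : ℝ}
    (hf : ∀ z, HasGradientAt f (f' z) z)
    (hlip : ∀ a b, ‖f' a - f' b‖ ≤ L * ‖a - b‖) (a b : E) :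
    f a + ⟪f' a, b - a⟫ - L / 2 * ‖b - a‖ ^ 2 ≤ f b := by
  have hneg : ∀ z, HasGradientAt (-f) (-f' z) z := fun z => by
    simpa using ((hf z).hasFDerivAt.neg).hasGradientAt
  have := le_add_inner_add_of_lipschitz_gradient hneg (L := L)
    (fun a b => by rw [neg_sub_neg, norm_sub_rev]; exact hlip a b) a b
  rw [inner_neg_left, Pi.neg_apply, Pi.neg_apply] at this
  linarith

theorem gap_contraction {φ : P → ℝ} {ψ : P → P} {B : P →L[ℝ] P} {m Lg μ lam ρ ρu : ℝ} {y y' : P}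
    (hφ : ∀ z, HasGradientAt φ (ψ z) z) (hψ : ∀ a b, ‖ψ a - ψ b‖ ≤ Lg * ‖a - b‖)
    (hPL : 2 * μ * (φ y - m) ≤ ‖ψ y‖ ^ 2)
    (hB : ∀ v w, ⟪B v, w⟫ = ⟪v, B w⟫) (hBl : ∀ v, ρ * ‖v‖ ^ 2 ≤ ⟪B v, v⟫)
    (hBu : ∀ v, ⟪B v, v⟫ ≤ ρu * ‖v‖ ^ 2) (hρ : 0 ≤ ρ) (hρu : 0 < ρu) (hlam : 0 < lam)
    (hlamLg : 2 * lam * Lg ≤ ρ) (hstep : B (y - y') = lam • ψ y) :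
    φ y' - m ≤ (1 - lam * μ / ρu) * (φ y - m) := by
  have hdesc := le_add_inner_add_of_lipschitz_gradient hφ hψ y y'
  rw [← neg_sub y y', inner_neg_right, norm_neg] at hdesc
  set u := y - y'
  have hQ : ⟪B u, u⟫ = lam * ⟪ψ y, u⟫ := by rw [hstep, real_inner_smul_left]
  have hcurv : 2 * lam * Lg * ‖u‖ ^ 2 ≤ ⟪B u, u⟫ :=
    (mul_le_mul_of_nonneg_right hlamLg (sq_nonneg _)).trans (hBl u)
  have hnorm : lam ^ 2 * ‖ψ y‖ ^ 2 ≤ ρu * ⟪B u, u⟫ := by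
    have hBu_sq : ‖B u‖ ^ 2 = lam ^ 2 * ‖ψ y‖ ^ 2 := by
      rw [hstep, norm_smul, mul_pow, Real.norm_eq_abs, sq_abs]
    rw [← hBu_sq]
    exact norm_sq_apply_le_mul_inner_apply_self hρu hB
      (fun v => (mul_nonneg hρ (sq_nonneg _)).trans (hBl v)) hBu u
  have hdecrease : 2 * lam * (φ y' - m) + ⟪B u, u⟫ ≤ 2 * lam * (φ y - m) := by
    linarith [mul_le_mul_of_nonneg_left hdesc (by positivity : (0 : ℝ) ≤ 2 * lam),
      (mul_nonneg hρ (sq_nonneg ‖u‖)).trans (hBl u)]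
  have hkey : 2 * lam * ρu * (φ y' - m)
      ≤ 2 * lam * ρu * (φ y - m) - 2 * lam ^ 2 * μ * (φ y - m) := by
    linarith [mul_le_mul_of_nonneg_left hdecrease hρu.le,
      mul_le_mul_of_nonneg_left hPL (sq_nonneg lam)]
  have hrhs : 2 * lam * ρu * ((1 - lam * μ / ρu) * (φ y - m))
      = 2 * lam * ρu * (φ y - m) - 2 * lam ^ 2 * μ * (φ y - m) := by
    field_simp
  exact le_of_mul_le_mul_left (hkey.trans_eq hrhs.symm) (by positivity)

theorem gap_shift_le {φ G : E → ℝ} {φ' G' : E → E} {Lg LG μ κ r : ℝ} {x x' : E}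
    (hφ : ∀ z, HasGradientAt φ (φ' z) z) (hφ' : ∀ a b, ‖φ' a - φ' b‖ ≤ Lg * ‖a - b‖)
    (hG : ∀ z, HasGradientAt G (G' z) z) (hG' : ∀ a b, ‖G' a - G' b‖ ≤ LG * ‖a - b‖)
    (hLg : Lg ≤ LG) (hcross : ‖φ' x - G' x‖ ≤ Lg * r) (hQG : μ / 2 * r ^ 2 ≤ φ x - G x)
    (hμ : 0 < μ) (hκ : 0 < κ) :
    φ x' - G x' ≤ (1 + κ / 3) * (φ x - G x) + (LG + 3 * Lg ^ 2 / (2 * κ * μ)) * ‖x' - x‖ ^ 2 := by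
  have hφx' := le_add_inner_add_of_lipschitz_gradient hφ hφ' x x'
  have hGx' := add_inner_sub_le_of_lipschitz_gradient hG hG' x x'
  set D := ‖x' - x‖
  have hinner : ⟪φ' x, x' - x⟫ - ⟪G' x, x' - x⟫ ≤ Lg * r * D := by
    rw [← inner_sub_left]
    exact (real_inner_le_norm _ _).trans (mul_le_mul_of_nonneg_right hcross (norm_nonneg _))
  set C := 3 * Lg ^ 2 / (2 * κ * μ)
  have hC : C * (2 * κ * μ) = 3 * Lg ^ 2 := div_mul_cancel₀ _ (by positivity)
  -- Young's inequality, weighted so that `hQG` absorbs the `r²` term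
  have hyoung : Lg * r * D ≤ κ * μ / 6 * r ^ 2 + C * D ^ 2 := by
    refine le_of_mul_le_mul_left ?_ (by positivity : (0 : ℝ) < 6 * κ * μ)
    nlinarith [sq_nonneg (κ * μ * r - 3 * Lg * D)]
  linarith [mul_le_mul_of_nonneg_right hLg (sq_nonneg D), mul_le_mul_of_nonneg_left hQG hκ.le]

theorem objective_step_le {F h : E → ℝ} {F' : E → E} {A : E →L[ℝ] E} {LF γ ρ : ℝ} {w x x' : E}
    (hF : ∀ z, HasGradientAt F (F' z) z) (hF' : ∀ a b, ‖F' a - F' b‖ ≤ LF * ‖a - b‖)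
    (hA : ∀ v w, ⟪A v, w⟫ = ⟪v, A w⟫) (hApos : ∀ v, ρ * ‖v‖ ^ 2 ≤ ⟪A v, v⟫)
    (hh : ConvexOn ℝ Set.univ h) (hγ : 0 < γ) (hρ : 0 < ρ) (hγLF : 4 * γ * LF ≤ 3 * ρ)
    (hmin : IsMinOn (proxObjective A γ h w x) Set.univ x') :
    8 * γ * ρ * (F x' + h x' - (F x + h x))
      ≤ 16 * γ ^ 2 * ‖w - F' x‖ ^ 2 - 4 * ρ ^ 2 * ‖x' - x‖ ^ 2 := by
  have hvar := proxObjective_variational_ineq hA hh hmin x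
  have hdesc := le_add_inner_add_of_lipschitz_gradient hF hF' x x'
  rw [← neg_sub x' x, inner_neg_right, inner_neg_right] at hvar
  set Δ := x' - x
  have hprox : γ * (⟪w, Δ⟫ + h x' - h x) ≤ -(ρ * ‖Δ‖ ^ 2) := by
    have := (inv_mul_le_iff₀ hγ).1 (by linarith : γ⁻¹ * ⟪A Δ, Δ⟫ ≤ -⟪w, Δ⟫ + h x - h x')
    linarith [hApos Δ]
  have herr : ⟪F' x, Δ⟫ - ⟪w, Δ⟫ ≤ ‖w - F' x‖ * ‖Δ‖ := by
    rw [← inner_sub_left, ← norm_neg (w - F' x), neg_sub]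
    exact real_inner_le_norm _ _
  have hγρ : 0 ≤ 8 * γ * ρ := by positivity
  linarith [mul_le_mul_of_nonneg_left hdesc hγρ, mul_le_mul_of_nonneg_left herr hγρ,
    mul_le_mul_of_nonneg_left hprox (by positivity : (0 : ℝ) ≤ 8 * ρ),
    mul_le_mul_of_nonneg_left (mul_le_mul_of_nonneg_right hγLF (sq_nonneg ‖Δ‖)) hρ.le,
    sq_nonneg (4 * γ * ‖w - F' x‖ - ρ * ‖Δ‖)]

theorem potential_step {g : E → P → ℝ} {gx : E → P → E} {gy : E → P → P} {G : E → ℝ}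
    {ystar : E → P} {F h : E → ℝ} {F' : E → E} {A : E →L[ℝ] E} {B : P →L[ℝ] P}
    {μ Lg LG LF σ ρ ρu γ lam : ℝ} {x x' xbar w : E} {y y' : P}
    (hgx : ∀ z, HasGradientAt (fun z' => g z' y') (gx z y') z)
    (hgy : ∀ z, HasGradientAt (fun z' => g x z') (gy x z) z)
    (hgxlipx : ∀ a b, ‖gx a y' - gx b y'‖ ≤ Lg * ‖a - b‖)
    (hgxlipy : ‖gx x y' - gx x (ystar x)‖ ≤ Lg * ‖y' - ystar x‖)
    (hgylipy : ∀ a b, ‖gy x a - gy x b‖ ≤ Lg * ‖a - b‖)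
    (hGlow : G x ≤ g x y) (hPL : 2 * μ * (g x y - G x) ≤ ‖gy x y‖ ^ 2)
    (hQG : μ / 2 * ‖y' - ystar x‖ ^ 2 ≤ g x y' - G x)
    (hG : ∀ z, HasGradientAt G (gx z (ystar z)) z)
    (hGlip : ∀ a b, ‖gx a (ystar a) - gx b (ystar b)‖ ≤ LG * ‖a - b‖)
    (hF : ∀ z, HasGradientAt F (F' z) z) (hFlip : ∀ a b, ‖F' a - F' b‖ ≤ LF * ‖a - b‖)
    (hh : ConvexOn ℝ Set.univ h)
    (hAsymm : ∀ v w, ⟪A v, w⟫ = ⟪v, A w⟫) (hApos : ∀ v, ρ * ‖v‖ ^ 2 ≤ ⟪A v, v⟫)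
    (hBsymm : ∀ v w, ⟪B v, w⟫ = ⟪v, B w⟫) (hBl : ∀ v, ρ * ‖v‖ ^ 2 ≤ ⟪B v, v⟫)
    (hBu : ∀ v, ⟪B v, v⟫ ≤ ρu * ‖v‖ ^ 2)
    (hx' : IsMinOn (proxObjective A γ h w x) Set.univ x')
    (hxbar : IsMinOn (proxObjective A γ h (F' x) x) Set.univ xbar)
    (hy' : B (y - y') = lam • gy x y) (hw : ‖w - F' x‖ ^ 2 ≤ σ * (g x y - G x))
    (hμ : 0 < μ) (hρ : 0 < ρ) (hρu : 0 < ρu) (hγ : 0 < γ) (hlam : 0 < lam) (hLg : Lg ≤ LG)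
    (hlamLg : 2 * lam * Lg ≤ ρ) (hγLF : 4 * γ * LF ≤ 3 * ρ)
    (hγLG : γ * (LG + 3 * Lg ^ 2 / (2 * (lam * μ / ρu) * μ)) ≤ ρ / 4)
    (hγσ : 27 * γ * σ * ρu ≤ 8 * ρ * lam * μ) :
    ρ * γ / 8 * ‖γ⁻¹ • (x - xbar)‖ ^ 2
      ≤ F x + h x + (g x y - G x) - (F x' + h x' + (g x' y' - G x')) := by
  set κ := lam * μ / ρu
  have hκ : 0 < κ := by positivity
  have hδ : 0 ≤ g x y - G x := sub_nonneg.2 hGlow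
  have hcontr := gap_contraction (hgy ·) hgylipy hPL hBsymm hBl hBu hρ.le hρu hlam hlamLg hy'
  have hshift := gap_shift_le hgx hgxlipx hG hGlip hLg hgxlipy hQG hμ hκ (x' := x')
  have hobj := objective_step_le hF hFlip hAsymm hApos hh hγ hρ hγLF hx'
  have hmap := gradientMapping_sq_le hAsymm hApos hh hγ hρ.le hx' hxbar
  have hgap : g x' y' - G x' ≤ (1 - 2 * κ / 3) * (g x y - G x)
      + (LG + 3 * Lg ^ 2 / (2 * κ * μ)) * ‖x' - x‖ ^ 2 := by
    linarith [mul_le_mul_of_nonneg_left hcontr (by positivity : (0 : ℝ) ≤ 1 + κ / 3),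
      mul_nonneg (mul_nonneg hκ.le hκ.le) hδ]
  have hnoise : 18 * γ ^ 2 * ‖w - F' x‖ ^ 2 ≤ 16 / 3 * γ * ρ * κ * (g x y - G x) := by
    have hκρu : κ * ρu = lam * μ := div_mul_cancel₀ _ hρu.ne'
    have hγσ' : γ * σ ≤ 8 / 27 * ρ * κ :=
      le_of_mul_le_mul_right (by nlinarith : γ * σ * ρu ≤ 8 / 27 * ρ * κ * ρu) hρu
    linarith [mul_le_mul_of_nonneg_left hw (by positivity : (0 : ℝ) ≤ 18 * γ ^ 2),
      mul_le_mul_of_nonneg_left hγσ' (by positivity : (0 : ℝ) ≤ 18 * γ * (g x y - G x))]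
  have hweight := mul_le_mul_of_nonneg_left (mul_le_mul_of_nonneg_right hγLG (sq_nonneg ‖x' - x‖))
    (by positivity : (0 : ℝ) ≤ 8 * ρ)
  have hdecrease : ρ ^ 2 * (γ ^ 2 * ‖γ⁻¹ • (x - xbar)‖ ^ 2) ≤
      8 * γ * ρ * (F x + h x + (g x y - G x) - (F x' + h x' + (g x' y' - G x'))) := by
    linarith [mul_le_mul_of_nonneg_left hgap (by positivity : (0 : ℝ) ≤ 8 * γ * ρ)]
  refine le_of_mul_le_mul_left ?_ (by positivity : (0 : ℝ) < 8 * γ * ρ)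
  linarith

end Smooth

theorem sum_Icc_le_of_le_sub_succ {a V : ℕ → ℝ} (h : ∀ t, a t ≤ V t - V (t + 1)) :
    ∀ T, ∑ t ∈ Finset.Icc 1 T, a t ≤ V 1 - V (T + 1)
  | 0 => by simp
  | T + 1 => by
    rw [Finset.sum_Icc_succ_top (by omega)]
    linarith [sum_Icc_le_of_le_sub_succ h T, h (T + 1)]

theorem stepsize_conditions {μ Lg LG LF Lhat ρ ρu γ lam : ℝ}
    (hμ : 0 < μ) (hμLg : μ ≤ Lg) (hLG : max Lg (Lg ^ 2 / (2 * μ)) ≤ LG)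
    (hρ : 0 < ρ) (hρ1 : ρ < 1) (hρu : 0 < ρu) (hρρu : 1 ≤ ρ * ρu)
    (hγ : 0 < γ) (hγ1 : γ ≤ 3 * ρ / (4 * LF))
    (hγ2 : γ ≤ ρ * lam * μ ^ 2 / (8 * ρu * Lhat ^ 2))
    (hγ3 : γ ≤ lam * μ * ρ / (16 * LG * ρu))
    (hlam : 0 < lam) (hlamle : lam ≤ 1 / (2 * Lg * ρu)) :
    2 * lam * Lg ≤ ρ ∧ 4 * γ * LF ≤ 3 * ρ
      ∧ γ * (LG + 3 * Lg ^ 2 / (2 * (lam * μ / ρu) * μ)) ≤ ρ / 4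
      ∧ 27 * γ * (2 * Lhat ^ 2 / μ) * ρu ≤ 8 * ρ * lam * μ := by
  have hLg : 0 < Lg := hμ.trans_le hμLg
  have hLG0 : 0 < LG := hLg.trans_le ((le_max_left _ _).trans hLG)
  have hLg2 : Lg ^ 2 ≤ 2 * μ * LG := by
    have := (div_le_iff₀ (by positivity)).1 ((le_max_right _ _).trans hLG)
    linarith
  have hρu1 : 1 ≤ ρu := by nlinarith
  have hlam' : lam * (2 * Lg * ρu) ≤ 1 := (le_div_iff₀ (by positivity)).1 hlamle
  have hγ3' : γ * (16 * LG * ρu) ≤ lam * μ * ρ := (le_div_iff₀ (by positivity)).1 hγ3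
  have hγ2' : γ * (8 * ρu * Lhat ^ 2) ≤ ρ * lam * μ ^ 2 :=
    mul_le_of_le_div₀ (by positivity) (by positivity) hγ2
  refine ⟨by nlinarith, ?_, ?_, ?_⟩
  · rcases le_or_gt LF 0 with hLF | hLF
    · nlinarith
    · linarith [(le_div_iff₀ (by positivity : (0 : ℝ) < 4 * LF)).1 hγ1]
  · have hlamμ : 2 * lam * μ * ρu ≤ 1 := by
      linarith [mul_le_mul_of_nonneg_left hμLg (by positivity : (0 : ℝ) ≤ 2 * lam * ρu)]
    have hLGpart : γ * LG ≤ ρ / 32 := by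
      linarith [mul_le_mul_of_nonneg_left hγ3' (by positivity : (0 : ℝ) ≤ 2 * ρu),
        mul_le_mul_of_nonneg_left hlamμ hρ.le,
        mul_le_mul_of_nonneg_left (one_le_pow₀ hρu1 : (1 : ℝ) ≤ ρu ^ 2)
          (by positivity : (0 : ℝ) ≤ 32 * γ * LG)]
    have hCpart : γ * (3 * Lg ^ 2 / (2 * (lam * μ / ρu) * μ)) ≤ 3 * ρ / 16 := by
      rw [show 3 * Lg ^ 2 / (2 * (lam * μ / ρu) * μ) = 3 * Lg ^ 2 * ρu / (2 * lam * μ ^ 2) by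
        field_simp, mul_div_assoc', div_le_iff₀ (by positivity)]
      linarith [mul_le_mul_of_nonneg_left hLg2 (by positivity : (0 : ℝ) ≤ 3 * γ * ρu),
        mul_le_mul_of_nonneg_left hγ3' (by positivity : (0 : ℝ) ≤ 3 * μ / 8)]
    linarith
  · rw [show 27 * γ * (2 * Lhat ^ 2 / μ) * ρu = 27 / 4 * (γ * (8 * ρu * Lhat ^ 2)) / μ by
      field_simp; ring, div_le_iff₀ hμ]
    linarith [(by positivity : (0 : ℝ) ≤ ρ * lam * μ ^ 2)]

theorem stmt_18_general {d p : ℕ} (μ Lg LG LF Lhat ρ ρu γ lam Φstar : ℝ) (T : ℕ)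
    (hμ : 0 < μ) (hμLg : μ ≤ Lg) (hLG : max Lg (Lg ^ 2 / (2 * μ)) ≤ LG)
    (hρ : 0 < ρ) (hρ1 : ρ < 1) (hρu : 0 < ρu) (hρρu : 1 ≤ ρ * ρu)
    (g : EuclideanSpace ℝ (Fin d) → EuclideanSpace ℝ (Fin p) → ℝ)
    (gx : EuclideanSpace ℝ (Fin d) → EuclideanSpace ℝ (Fin p) → EuclideanSpace ℝ (Fin d))
    (gy : EuclideanSpace ℝ (Fin d) → EuclideanSpace ℝ (Fin p) → EuclideanSpace ℝ (Fin p))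
    (hgx : ∀ x y, HasGradientAt (fun x' => g x' y) (gx x y) x)
    (hgy : ∀ x y, HasGradientAt (fun y' => g x y') (gy x y) y)
    (hgxlipy : ∀ x y₁ y₂, ‖gx x y₁ - gx x y₂‖ ≤ Lg * ‖y₁ - y₂‖)
    (hgxlipx : ∀ x₁ x₂ y, ‖gx x₁ y - gx x₂ y‖ ≤ Lg * ‖x₁ - x₂‖)
    (hgylipy : ∀ x y₁ y₂, ‖gy x y₁ - gy x y₂‖ ≤ Lg * ‖y₁ - y₂‖)
    (G : EuclideanSpace ℝ (Fin d) → ℝ)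
    (ystar : EuclideanSpace ℝ (Fin d) → EuclideanSpace ℝ (Fin p))
    (hGlow : ∀ x y, G x ≤ g x y)
    (hPL : ∀ x y, ‖gy x y‖ ^ 2 ≥ 2 * μ * (g x y - G x))
    (hQG : ∀ x y, g x y - G x ≥ (μ / 2) * ‖y - ystar x‖ ^ 2)
    (hGgrad : ∀ x, HasGradientAt G (gx x (ystar x)) x)
    (hGlip : ∀ x₁ x₂, ‖gx x₁ (ystar x₁) - gx x₂ (ystar x₂)‖ ≤ LG * ‖x₁ - x₂‖)
    (F : EuclideanSpace ℝ (Fin d) → ℝ)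
    (F' : EuclideanSpace ℝ (Fin d) → EuclideanSpace ℝ (Fin d))
    (hF : ∀ z, HasGradientAt F (F' z) z)
    (hFlip : ∀ z₁ z₂, ‖F' z₁ - F' z₂‖ ≤ LF * ‖z₁ - z₂‖)
    (h : EuclideanSpace ℝ (Fin d) → ℝ) (hconv : ConvexOn ℝ Set.univ h)
    -- `Φ = F + h` is bounded below by `Φ*`:
    (hΦstar : ∀ z, Φstar ≤ F z + h z)
    (x : ℕ → EuclideanSpace ℝ (Fin d)) (y : ℕ → EuclideanSpace ℝ (Fin p))
    (w : ℕ → EuclideanSpace ℝ (Fin d))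
    (A : ℕ → (EuclideanSpace ℝ (Fin d) →L[ℝ] EuclideanSpace ℝ (Fin d)))
    (B : ℕ → (EuclideanSpace ℝ (Fin p) →L[ℝ] EuclideanSpace ℝ (Fin p)))
    (hAsymm : ∀ t v' w', ⟪A t v', w'⟫ = ⟪v', A t w'⟫)
    (hApos : ∀ t v', ρ * ‖v'‖ ^ 2 ≤ ⟪A t v', v'⟫)
    (hBsymm : ∀ t v' w', ⟪B t v', w'⟫ = ⟪v', B t w'⟫)
    (hBl : ∀ t v', ρ * ‖v'‖ ^ 2 ≤ ⟪B t v', v'⟫)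
    (hBu : ∀ t v', ⟪B t v', v'⟫ ≤ ρu * ‖v'‖ ^ 2)
    (hx : ∀ t z, ⟪w t, x (t + 1)⟫
        + (1 / (2 * γ)) * ⟪A t (x (t + 1) - x t), x (t + 1) - x t⟫ + h (x (t + 1))
      ≤ ⟪w t, z⟫ + (1 / (2 * γ)) * ⟪A t (z - x t), z - x t⟫ + h z)
    (hy : ∀ t, B t (y t - y (t + 1)) = lam • gy (x t) (y t))
    (hw : ∀ t, ‖w t - F' (x t)‖ ^ 2 ≤ (2 * Lhat ^ 2 / μ) * (g (x t) (y t) - G (x t)))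
    (hγ : 0 < γ) (hγ1 : γ ≤ 3 * ρ / (4 * LF))
    (hγ2 : γ ≤ ρ * lam * μ ^ 2 / (8 * ρu * Lhat ^ 2))
    (hγ3 : γ ≤ lam * μ * ρ / (16 * LG * ρu))
    (hlam : 0 < lam) (hlamle : lam ≤ 1 / (2 * Lg * ρu))
    -- `x̄_{t+1}` is the proximal mirror step taken from `x_t` with the exact hypergradient
    -- `∇F(x_t)`, defining the gradient mapping `𝒢(x_t,∇F(x_t),γ) = (x_t − x̄_{t+1})/γ`:
    (xbar : ℕ → EuclideanSpace ℝ (Fin d))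
    (hxbar : ∀ t z, ⟪F' (x t), xbar t⟫
        + (1 / (2 * γ)) * ⟪A t (xbar t - x t), xbar t - x t⟫ + h (xbar t)
      ≤ ⟪F' (x t), z⟫ + (1 / (2 * γ)) * ⟪A t (z - x t), z - x t⟫ + h z) :
    (1 / (T : ℝ)) * ∑ t ∈ Finset.Icc 1 T, ‖γ⁻¹ • (x t - xbar t)‖ ^ 2
      ≤ 8 * (F (x 1) + h (x 1) - Φstar + (g (x 1) (y 1) - G (x 1))) / (T * ρ * γ) := by
  obtain ⟨hlamLg, hγLF, hγLG, hγσ⟩ := stepsize_conditions (Lhat := Lhat) hμ hμLg hLG hρ hρ1 hρu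
    hρρu hγ hγ1 hγ2 hγ3 hlam hlamle
  set V : ℕ → ℝ := fun t => F (x t) + h (x t) + (g (x t) (y t) - G (x t))
  have hstep : ∀ t, ρ * γ / 8 * ‖γ⁻¹ • (x t - xbar t)‖ ^ 2 ≤ V t - V (t + 1) := fun t =>
    potential_step (hgx · (y (t + 1))) (hgy (x t)) (hgxlipx · · (y (t + 1)))
      (hgxlipy (x t) (y (t + 1)) (ystar (x t))) (hgylipy (x t)) (hGlow (x t) (y t))
      (hPL (x t) (y t)) (hQG (x t) (y (t + 1))) hGgrad hGlip hF hFlip hconv (hAsymm t) (hApos t)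
      (hBsymm t) (hBl t) (hBu t) (fun z _ => hx t z) (fun z _ => hxbar t z) (hy t) (hw t)
      hμ hρ hρu hγ hlam ((le_max_left _ _).trans hLG) hlamLg hγLF hγLG hγσ
  set D := F (x 1) + h (x 1) - Φstar + (g (x 1) (y 1) - G (x 1))
  have hfinal : V 1 - V (T + 1) ≤ D := by
    linarith [hΦstar (x (T + 1)), hGlow (x (T + 1)) (y (T + 1))]
  have hsum : (∑ t ∈ Finset.Icc 1 T, ‖γ⁻¹ • (x t - xbar t)‖ ^ 2) * (ρ * γ) ≤ 8 * D := by
    have := (sum_Icc_le_of_le_sub_succ hstep T).trans hfinal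
    rw [← Finset.mul_sum] at this
    linarith
  calc (1 / (T : ℝ)) * ∑ t ∈ Finset.Icc 1 T, ‖γ⁻¹ • (x t - xbar t)‖ ^ 2
      ≤ (1 / (T : ℝ)) * (8 * D / (ρ * γ)) := by
        gcongr
        exact (le_div_iff₀ (by positivity)).2 hsum
    _ = 8 * D / (T * ρ * γ) := by ring

/-- (Theorem 1 of the paper.) Convergence of AdaPAG: under the bilevel
smoothness/PL/quadratic-growth assumptions, the adaptive mirror-descent updates with
`A_t ⪰ ρ I`, `ρ_l I ⪯ B_t ⪯ ρ_u I` (`ρ_l = ρ ∈ (0,1)`, `ρ_l ρ_u ≥ 1`), hypergradient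
estimation bound `‖w_t − ∇F(x_t)‖² ≤ (2L̂²/μ)(g(x_t,y_t) − G(x_t))`, step sizes as stated,
and `Φ = F + h` bounded below by `Φ*`, the averaged squared gradient mapping
`𝒢(x_t, ∇F(x_t), γ) = (x_t − x̄_{t+1})/γ` satisfies
`(1/T) Σ_{t=1}^T ‖𝒢(x_t,∇F(x_t),γ)‖² ≤ 8(Φ(x_1) − Φ* + g(x_1,y_1) − G(x_1))/(Tργ)`. -/
theorem stmt_18 {d p : ℕ} (μ Lg LG LF Lhat ρ ρu γ lam Φstar : ℝ) (T : ℕ) (hT : 0 < T)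
    (hμ : 0 < μ) (hμLg : μ ≤ Lg) (hLG : max Lg (Lg ^ 2 / (2 * μ)) ≤ LG)
    (hLhat : 0 < Lhat)
    (hρ : 0 < ρ) (hρ1 : ρ < 1) (hρu : 0 < ρu) (hρρu : 1 ≤ ρ * ρu)
    (g : EuclideanSpace ℝ (Fin d) → EuclideanSpace ℝ (Fin p) → ℝ)
    (gx : EuclideanSpace ℝ (Fin d) → EuclideanSpace ℝ (Fin p) → EuclideanSpace ℝ (Fin d))
    (gy : EuclideanSpace ℝ (Fin d) → EuclideanSpace ℝ (Fin p) → EuclideanSpace ℝ (Fin p))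
    (hgx : ∀ x y, HasGradientAt (fun x' => g x' y) (gx x y) x)
    (hgy : ∀ x y, HasGradientAt (fun y' => g x y') (gy x y) y)
    (hgxlipy : ∀ x y₁ y₂, ‖gx x y₁ - gx x y₂‖ ≤ Lg * ‖y₁ - y₂‖)
    (hgxlipx : ∀ x₁ x₂ y, ‖gx x₁ y - gx x₂ y‖ ≤ Lg * ‖x₁ - x₂‖)
    (hgylipy : ∀ x y₁ y₂, ‖gy x y₁ - gy x y₂‖ ≤ Lg * ‖y₁ - y₂‖)
    (hgylipx : ∀ x₁ x₂ y, ‖gy x₁ y - gy x₂ y‖ ≤ Lg * ‖x₁ - x₂‖)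
    (G : EuclideanSpace ℝ (Fin d) → ℝ)
    (ystar : EuclideanSpace ℝ (Fin d) → EuclideanSpace ℝ (Fin p))
    (hGval : ∀ x, g x (ystar x) = G x) (hGlow : ∀ x y, G x ≤ g x y)
    (hPL : ∀ x y, ‖gy x y‖ ^ 2 ≥ 2 * μ * (g x y - G x))
    (hQG : ∀ x y, g x y - G x ≥ (μ / 2) * ‖y - ystar x‖ ^ 2)
    (hGgrad : ∀ x, HasGradientAt G (gx x (ystar x)) x)
    (hGlip : ∀ x₁ x₂, ‖gx x₁ (ystar x₁) - gx x₂ (ystar x₂)‖ ≤ LG * ‖x₁ - x₂‖)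
    (F : EuclideanSpace ℝ (Fin d) → ℝ)
    (F' : EuclideanSpace ℝ (Fin d) → EuclideanSpace ℝ (Fin d))
    (hF : ∀ z, HasGradientAt F (F' z) z)
    (hFlip : ∀ z₁ z₂, ‖F' z₁ - F' z₂‖ ≤ LF * ‖z₁ - z₂‖)
    (h : EuclideanSpace ℝ (Fin d) → ℝ) (hconv : ConvexOn ℝ Set.univ h)
    -- `Φ = F + h` is bounded below by `Φ*`:
    (hΦstar : ∀ z, Φstar ≤ F z + h z)
    (x : ℕ → EuclideanSpace ℝ (Fin d)) (y : ℕ → EuclideanSpace ℝ (Fin p))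
    (w : ℕ → EuclideanSpace ℝ (Fin d))
    (A : ℕ → (EuclideanSpace ℝ (Fin d) →L[ℝ] EuclideanSpace ℝ (Fin d)))
    (B : ℕ → (EuclideanSpace ℝ (Fin p) →L[ℝ] EuclideanSpace ℝ (Fin p)))
    (hAsymm : ∀ t v' w', ⟪A t v', w'⟫ = ⟪v', A t w'⟫)
    (hApos : ∀ t v', ρ * ‖v'‖ ^ 2 ≤ ⟪A t v', v'⟫)
    (hBsymm : ∀ t v' w', ⟪B t v', w'⟫ = ⟪v', B t w'⟫)
    (hBl : ∀ t v', ρ * ‖v'‖ ^ 2 ≤ ⟪B t v', v'⟫)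
    (hBu : ∀ t v', ⟪B t v', v'⟫ ≤ ρu * ‖v'‖ ^ 2)
    (hx : ∀ t z, ⟪w t, x (t + 1)⟫
        + (1 / (2 * γ)) * ⟪A t (x (t + 1) - x t), x (t + 1) - x t⟫ + h (x (t + 1))
      ≤ ⟪w t, z⟫ + (1 / (2 * γ)) * ⟪A t (z - x t), z - x t⟫ + h z)
    (hy : ∀ t, B t (y t - y (t + 1)) = lam • gy (x t) (y t))
    (hw : ∀ t, ‖w t - F' (x t)‖ ^ 2 ≤ (2 * Lhat ^ 2 / μ) * (g (x t) (y t) - G (x t)))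
    (hγ : 0 < γ) (hγ1 : γ ≤ 3 * ρ / (4 * LF))
    (hγ2 : γ ≤ ρ * lam * μ ^ 2 / (8 * ρu * Lhat ^ 2))
    (hγ3 : γ ≤ lam * μ * ρ / (16 * LG * ρu))
    (hγ4 : γ ≤ μ * ρ / (16 * Lg ^ 2 * ρu))
    (hlam : 0 < lam) (hlamle : lam ≤ 1 / (2 * Lg * ρu))
    -- `x̄_{t+1}` is the proximal mirror step taken from `x_t` with the exact hypergradient
    -- `∇F(x_t)`, defining the gradient mapping `𝒢(x_t,∇F(x_t),γ) = (x_t − x̄_{t+1})/γ`: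
    (xbar : ℕ → EuclideanSpace ℝ (Fin d))
    (hxbar : ∀ t z, ⟪F' (x t), xbar t⟫
        + (1 / (2 * γ)) * ⟪A t (xbar t - x t), xbar t - x t⟫ + h (xbar t)
      ≤ ⟪F' (x t), z⟫ + (1 / (2 * γ)) * ⟪A t (z - x t), z - x t⟫ + h z) :
    (1 / (T : ℝ)) * ∑ t ∈ Finset.Icc 1 T, ‖γ⁻¹ • (x t - xbar t)‖ ^ 2
      ≤ 8 * (F (x 1) + h (x 1) - Φstar + (g (x 1) (y 1) - G (x 1))) / (T * ρ * γ) :=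
  stmt_18_general μ Lg LG LF Lhat ρ ρu γ lam Φstar T hμ hμLg hLG hρ hρ1 hρu hρρu g gx gy hgx hgy
    hgxlipy hgxlipx hgylipy G ystar hGlow hPL hQG hGgrad hGlip F F' hF hFlip h hconv hΦstar x y w A
    B hAsymm hApos hBsymm hBl hBu hx hy hw hγ hγ1 hγ2 hγ3 hlam hlamle xbar hxbar
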